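/- arXiv:math/0506236 — 3 statements merged into one kernel-verified Lean document; each statement's English description precedes it below -/
import Mathlib

section
/- For all integers M ≥ 2 and d ≥ 1 one has Σ_{i=1}^{d−1} (d+1)^M / ((d−i+1)^M · (i+1)^M) ≤ 4·(4 + 2/e)·Π_{k=1}^{M−1} (1 − 1/(2k)), where e is Euler's number. -/
lemma tele_sum_aux (n : ℕ) : ∑ i ∈ Finset.Icc 1 n, (1:ℝ)/((i:ℝ)+1)^2 ≤ 1 - 1/((n:ℝ)+1) := by
  induction n with
  | zero => simp
  | succ n ih =>
    rw [Finset.sum_Icc_succ_top (by omega)]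
    push_cast
    push_cast at ih
    have h1 : (0:ℝ) < (n:ℝ) + 1 := by positivity
    have h2 : (0:ℝ) < (n:ℝ) + 2 := by positivity
    have key : (1:ℝ)/((n:ℝ)+1+1)^2 ≤ 1/((n:ℝ)+1) - 1/((n:ℝ)+1+1) := by
      rw [div_sub_div _ _ h1.ne' (by positivity), div_le_div_iff₀ (by positivity) (by positivity)]
      nlinarith
    linarith

lemma tele_sum (n : ℕ) : ∑ i ∈ Finset.Icc 1 n, (1:ℝ)/((i:ℝ)+1)^2 ≤ 1 := by
  have h := tele_sum_aux n
  have h1 : (0:ℝ) < 1/((n:ℝ)+1) := by positivity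
  linarith

lemma tele_sum_rev (d : ℕ) : ∑ i ∈ Finset.Icc 1 (d-1), (1:ℝ)/((d:ℝ)-(i:ℝ)+1)^2 ≤ 1 := by
  have h : ∑ i ∈ Finset.Icc 1 (d-1), (1:ℝ)/((d:ℝ)-(i:ℝ)+1)^2
      = ∑ i ∈ Finset.Icc 1 (d-1), (1:ℝ)/((i:ℝ)+1)^2 := by
    refine Finset.sum_nbij' (fun a => d - a) (fun a => d - a) ?_ ?_ ?_ ?_ ?_
    · intro a ha; simp only [Finset.mem_Icc] at ha ⊢; omega
    · intro a ha; simp only [Finset.mem_Icc] at ha ⊢; omega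
    · intro a ha; simp only [Finset.mem_Icc] at ha; omega
    · intro a ha; simp only [Finset.mem_Icc] at ha; omega
    · intro a ha
      simp only [Finset.mem_Icc] at ha
      have hc : ((d - a : ℕ) : ℝ) = (d:ℝ) - (a:ℝ) := by
        have h : a ≤ d := by omega
        push_cast [Nat.cast_sub h]; ring
      simp only [hc]
  rw [h]; exact tele_sum (d-1)

/-- For all integers `M ≥ 2` and `d ≥ 1`,
`∑_{i=1}^{d-1} (d+1)^M / ((d-i+1)^M (i+1)^M) ≤ 4 (4 + 2/e) ∏_{k=1}^{M-1} (1 - 1/(2k))`,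
where `e` is Euler's number. -/
theorem epsilon_one_explicit_bound (M d : ℕ) (hM : 2 ≤ M) (hd : 1 ≤ d) :
    ∑ i ∈ Finset.Icc 1 (d - 1),
        ((d : ℝ) + 1) ^ M / (((d : ℝ) - (i : ℝ) + 1) ^ M * ((i : ℝ) + 1) ^ M)
      ≤ 4 * (4 + 2 / Real.exp 1) *
          ∏ k ∈ Finset.Icc 1 (M - 1), (1 - 1 / (2 * (k : ℝ))) := by
  have hpow : (0:ℝ) ≤ (3/4:ℝ)^(M-2) := by positivity
  -- Step 1: termwise bound
  have hterm : ∀ i ∈ Finset.Icc 1 (d-1),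
      ((d : ℝ) + 1) ^ M / (((d : ℝ) - (i : ℝ) + 1) ^ M * ((i : ℝ) + 1) ^ M)
        ≤ (3/4:ℝ)^(M-2) * (2 * (1/(((i:ℝ)+1)^2)) + 2 * (1/(((d:ℝ)-(i:ℝ)+1)^2))) := by
    intro i hi
    simp only [Finset.mem_Icc] at hi
    have hd2 : 2 ≤ d := by omega
    have hi1 : (1:ℝ) ≤ (i:ℝ) := by exact_mod_cast hi.1
    have hid : (i:ℝ) + 1 ≤ (d:ℝ) := by
      have : i + 1 ≤ d := by omega
      exact_mod_cast this
    have hdR : (2:ℝ) ≤ (d:ℝ) := by exact_mod_cast hd2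
    set X : ℝ := (d:ℝ) - (i:ℝ) + 1 with hXdef
    set Y : ℝ := (i:ℝ) + 1 with hYdef
    have hX : (0:ℝ) < X := by simp only [hXdef]; linarith
    have hY : (0:ℝ) < Y := by simp only [hYdef]; linarith
    have hXY : 2 * (d:ℝ) ≤ X * Y := by
      have : X * Y - 2*(d:ℝ) = ((i:ℝ) - 1) * ((d:ℝ) - (i:ℝ) - 1) := by
        simp only [hXdef, hYdef]; ring
      nlinarith [mul_nonneg (by linarith : (0:ℝ) ≤ (i:ℝ) - 1) (by linarith : (0:ℝ) ≤ (d:ℝ) - (i:ℝ) - 1)]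
    have heq : ((d : ℝ) + 1) ^ M / (X ^ M * Y ^ M) = (((d:ℝ)+1)/(X*Y))^M := by
      rw [div_pow, mul_pow]
    rw [heq]
    set a : ℝ := ((d:ℝ)+1)/(X*Y) with hadef
    have ha0 : 0 ≤ a := by positivity
    have ha34 : a ≤ 3/4 := by
      rw [hadef, div_le_iff₀ (by positivity)]
      nlinarith
    have haXY : a ≤ 1/Y + 1/X := by
      rw [hadef, div_add_div _ _ hY.ne' hX.ne', div_le_div_iff₀ (by positivity) (by positivity)]
      have hsum : X + Y = (d:ℝ) + 2 := by simp only [hXdef, hYdef]; ring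
      nlinarith [mul_pos hX hY]
    have hsplit : a ^ M = a^(M-2) * a^2 := by
      rw [← pow_add]; congr 1; omega
    have h1 : a^(M-2) ≤ (3/4:ℝ)^(M-2) := pow_le_pow_left₀ ha0 ha34 _
    have h2 : a^2 ≤ 2 * (1/Y^2) + 2 * (1/X^2) := by
      have hsq : a^2 ≤ (1/Y + 1/X)^2 := pow_le_pow_left₀ ha0 haXY 2
      have hexp : (1/Y + 1/X)^2 ≤ 2 * (1/Y)^2 + 2 * (1/X)^2 := by
        nlinarith [sq_nonneg (1/Y - 1/X)]
      have e1 : ((1:ℝ)/Y)^2 = 1/Y^2 := by rw [div_pow]; norm_num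
      have e2 : ((1:ℝ)/X)^2 = 1/X^2 := by rw [div_pow]; norm_num
      rw [e1, e2] at hexp
      linarith
    calc a ^ M = a^(M-2) * a^2 := hsplit
      _ ≤ (3/4:ℝ)^(M-2) * a^2 := mul_le_mul_of_nonneg_right h1 (sq_nonneg a)
      _ ≤ (3/4:ℝ)^(M-2) * (2 * (1/Y^2) + 2 * (1/X^2)) :=
          mul_le_mul_of_nonneg_left h2 hpow
  -- Step 2: bound the sum
  have hsum : ∑ i ∈ Finset.Icc 1 (d - 1),
      ((d : ℝ) + 1) ^ M / (((d : ℝ) - (i : ℝ) + 1) ^ M * ((i : ℝ) + 1) ^ M)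
      ≤ (3/4:ℝ)^(M-2) * 4 := by
    calc ∑ i ∈ Finset.Icc 1 (d - 1),
        ((d : ℝ) + 1) ^ M / (((d : ℝ) - (i : ℝ) + 1) ^ M * ((i : ℝ) + 1) ^ M)
        ≤ ∑ i ∈ Finset.Icc 1 (d-1),
            (3/4:ℝ)^(M-2) * (2 * (1/(((i:ℝ)+1)^2)) + 2 * (1/(((d:ℝ)-(i:ℝ)+1)^2))) :=
          Finset.sum_le_sum hterm
      _ = (3/4:ℝ)^(M-2) * (2 * ∑ i ∈ Finset.Icc 1 (d-1), (1/(((i:ℝ)+1)^2))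
            + 2 * ∑ i ∈ Finset.Icc 1 (d-1), (1/(((d:ℝ)-(i:ℝ)+1)^2))) := by
          rw [← Finset.mul_sum, Finset.sum_add_distrib, ← Finset.mul_sum, ← Finset.mul_sum]
      _ ≤ (3/4:ℝ)^(M-2) * 4 := by
          have h1 := tele_sum (d-1)
          have h2 := tele_sum_rev d
          have : 2 * ∑ i ∈ Finset.Icc 1 (d-1), (1/(((i:ℝ)+1)^2))
            + 2 * ∑ i ∈ Finset.Icc 1 (d-1), (1/(((d:ℝ)-(i:ℝ)+1)^2)) ≤ 4 := by linarith
          exact mul_le_mul_of_nonneg_left this hpow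
  -- Step 3: lower bound on the product
  have hprod : (1/2:ℝ) * (3/4:ℝ)^(M-2) ≤ ∏ k ∈ Finset.Icc 1 (M-1), (1 - 1/(2*(k:ℝ))) := by
    have hins : Finset.Icc 1 (M-1) = insert 1 (Finset.Icc 2 (M-1)) := by
      ext x; simp only [Finset.mem_Icc, Finset.mem_insert]; omega
    rw [hins, Finset.prod_insert (by simp [Finset.mem_Icc])]
    have h34 : ((3:ℝ)/4)^(M-2) ≤ ∏ k ∈ Finset.Icc 2 (M-1), (1 - 1/(2*(k:ℝ))) := by
      have hcard : (Finset.Icc 2 (M-1)).card = M - 2 := by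
        rw [Nat.card_Icc]; omega
      calc ((3:ℝ)/4)^(M-2) = ∏ _k ∈ Finset.Icc 2 (M-1), ((3:ℝ)/4) := by
            rw [Finset.prod_const, hcard]
        _ ≤ _ := by
            apply Finset.prod_le_prod
            · intros; norm_num
            · intro k hk
              simp only [Finset.mem_Icc] at hk
              have hk2 : (2:ℝ) ≤ (k:ℝ) := by exact_mod_cast hk.1
              have hpos : (0:ℝ) < 2 * (k:ℝ) := by linarith
              have : 1/(2*(k:ℝ)) ≤ 1/4 := by
                apply div_le_div_of_nonneg_left (by norm_num) (by norm_num)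
                linarith
              linarith
    have hrest0 : (0:ℝ) ≤ ∏ k ∈ Finset.Icc 2 (M-1), (1 - 1/(2*(k:ℝ))) := le_trans hpow h34
    push_cast
    nlinarith
  -- Step 4: conclude
  have hC : (16:ℝ) ≤ 4 * (4 + 2 / Real.exp 1) := by
    have : (0:ℝ) < 2 / Real.exp 1 := by positivity
    linarith
  have hP0 : (0:ℝ) ≤ ∏ k ∈ Finset.Icc 1 (M-1), (1 - 1/(2*(k:ℝ))) :=
    le_trans (by positivity) hprod
  calc ∑ i ∈ Finset.Icc 1 (d - 1),
      ((d : ℝ) + 1) ^ M / (((d : ℝ) - (i : ℝ) + 1) ^ M * ((i : ℝ) + 1) ^ M)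
      ≤ (3/4:ℝ)^(M-2) * 4 := hsum
    _ ≤ 16 * ((1/2:ℝ) * (3/4:ℝ)^(M-2)) := by linarith
    _ ≤ 16 * ∏ k ∈ Finset.Icc 1 (M-1), (1 - 1/(2*(k:ℝ))) :=
        mul_le_mul_of_nonneg_left hprod (by norm_num)
    _ ≤ 4 * (4 + 2 / Real.exp 1) * ∏ k ∈ Finset.Icc 1 (M-1), (1 - 1/(2*(k:ℝ))) :=
        mul_le_mul_of_nonneg_right hC hP0
end

section
/- The class 𝒪^{ℏ} is a local ring: it is closed under the Cauchy product (A·B)(m,n) = Σ_{m₁+m₂=m} Σ_{n₁+n₂=n} A(m₁,n₁)B(m₂,n₂), and every A ∈ 𝒪^{ℏ} with A(0,0) ≠ 0 has its Cauchy-product inverse again in 𝒪^{ℏ}, i.e. the inverse family satisfies conditions (0), (i), (ii) below with possibly different constants. -/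
open scoped BigOperators Classical

/-- `|m|₀ = ∑_{a=1}^r m_a`, the weight of a multi-index `m ∈ ℕ^s` in the first `r`
(exponential) variables. -/
def weight0 (s r : ℕ) (hrs : r ≤ s) (m : Fin s → ℕ) : ℕ :=
  ∑ a : Fin r, m (Fin.castLE hrs a)

/-- Membership in the class `𝒪^{ℏ}` of coefficient families `A : ℕ^s × ℕ → ℂ`:
(0) for each `m` only finitely many `n` have `A(m,n) ≠ 0`;
(i) `A(m,n) = 0` whenever `|m|₀ = 0` and `n > 0`;
(ii) there are `B, C > 0` with `|A(m,n)| ≤ B C^{|m|+n} |m|₀^n` (convention `0⁰ = 1`). -/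
def MemOhbar (s r : ℕ) (hrs : r ≤ s) (A : (Fin s → ℕ) → ℕ → ℂ) : Prop :=
  (∀ m : Fin s → ℕ, {n : ℕ | A m n ≠ 0}.Finite) ∧
  (∀ (m : Fin s → ℕ) (n : ℕ), weight0 s r hrs m = 0 → 0 < n → A m n = 0) ∧
  (∃ B C : ℝ, 0 < B ∧ 0 < C ∧ ∀ (m : Fin s → ℕ) (n : ℕ),
    ‖A m n‖ ≤ B * C ^ ((∑ j, m j) + n) * (weight0 s r hrs m : ℝ) ^ n)

/-- The Cauchy product `(A·B)(m,n) = ∑_{m₁+m₂=m} ∑_{n₁+n₂=n} A(m₁,n₁) B(m₂,n₂)` of two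
coefficient families indexed by `ℕ^s × ℕ` (a finite sum, written as a `tsum`). -/
noncomputable def cauchyProdN (s : ℕ) (A B : (Fin s → ℕ) → ℕ → ℂ) :
    (Fin s → ℕ) → ℕ → ℂ :=
  fun m n => ∑' p : (Fin s → ℕ) × ℕ,
    if p.1 ≤ m ∧ p.2 ≤ n then A p.1 p.2 * B (fun j => m j - p.1 j) (n - p.2) else 0

/-- The identity coefficient family: value `1` at `(m,n) = (0,0)` and `0` elsewhere. -/
def deltaFam (s : ℕ) : (Fin s → ℕ) → ℕ → ℂ :=
  fun m n => if m = 0 ∧ n = 0 then 1 else 0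

/-!
View a family as a function on the monoid `ℕ^s × ℕ`; the Cauchy product is then the convolution
over the lower sets `Iic p`. As `p - q < p` for `0 ≠ q ≤ p`, a family `F` with `F 0 ≠ 0` has a
unique convolution inverse `G`, determined by the recursion
`F 0 * G p = δ p - ∑_{0 ≠ q ≤ p} F q * G (p - q)`.

The weight `ω_C (m, n) = C ^ (|m| + n) * |m|₀ ^ n` of condition (ii) is supermultiplicative,
`ω_C q * ω_C q' ≤ ω_C (q + q')`, and `Iic p` has at most `2 ^ (|m| + n)` elements; this bounds
products. For the inverse, write `C = u² D` with `u` small: the terms with `q ≠ 0` then carry a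
factor `u ^ (2|q|) ≤ u * u ^ |q|`, whose sum over `Iic p` is at most `u * 2 ^ (s + 1)`, small
against `‖F 0‖`, so the recursion propagates `‖G p‖ ≤ ‖F 0‖⁻¹ * ω_D p`. Finiteness in `n`
follows from the same recursion: `G (m, n) = 0` once `n > N * |m|`, where `N` bounds the
`n`-support of `F` below `m`.
-/

open Finset Function

section CauchyConv

variable {M K : Type*} [AddCommMonoid M] [PartialOrder M] [CanonicallyOrderedAdd M] [Sub M]
  [OrderedSub M] [LocallyFiniteOrderBot M] [DecidableEq M] [Field K] {F G : M → K}

noncomputable def cauchyConv (F G : M → K) (p : M) : K :=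
  ∑ q ∈ Iic p, F q * G (p - q)

theorem cauchyConv_eq_add_sum_erase (F G : M → K) (p : M) :
    cauchyConv F G p = F 0 * G p + ∑ q ∈ (Iic p).erase 0, F q * G (p - q) := by
  rw [cauchyConv, ← add_sum_erase _ _ (mem_Iic.2 zero_le), tsub_zero]

theorem cauchyConv_apply_zero (F G : M → K) : cauchyConv F G 0 = F 0 * G 0 := by
  rw [cauchyConv_eq_add_sum_erase, sum_eq_zero, add_zero]
  intro q hq
  exact absurd (nonpos_iff_eq_zero.1 (mem_Iic.1 (mem_of_mem_erase hq))) (ne_of_mem_erase hq)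

theorem mul_eq_neg_sum_of_cauchyConv_eq_single (h : cauchyConv F G = Pi.single 0 1) {p : M}
    (hp : p ≠ 0) : F 0 * G p = -∑ q ∈ (Iic p).erase 0, F q * G (p - q) := by
  have h := congrFun h p
  rw [cauchyConv_eq_add_sum_erase, Pi.single_eq_of_ne hp] at h
  exact eq_neg_of_add_eq_zero_left h

variable [AddLeftReflectLE M]

theorem tsub_lt_self_of_mem_erase_Iic {p q : M} (hq : q ∈ (Iic p).erase 0) : p - q < p := by
  obtain ⟨hq0, hqp⟩ := mem_erase.1 hq
  refine tsub_le_self.lt_of_ne fun h => hq0 ?_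
  have hqp := add_tsub_cancel_of_le (mem_Iic.1 hqp)
  rw [h] at hqp
  exact nonpos_iff_eq_zero.1 (add_le_iff_nonpos_left.1 hqp.le)

variable [WellFoundedLT M]

theorem cauchyConv_injective (hF : F 0 ≠ 0) : Injective (cauchyConv F) := by
  intro G G' h
  funext p
  induction p using WellFoundedLT.induction with
  | ind p ih =>
    have hp := congrFun h p
    rw [cauchyConv_eq_add_sum_erase, cauchyConv_eq_add_sum_erase,
      sum_congr rfl fun q hq => by rw [ih _ (tsub_lt_self_of_mem_erase_Iic hq)]] at hp
    exact mul_left_cancel₀ hF (add_right_cancel hp)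

noncomputable def cauchyInv (F : M → K) : M → K :=
  WellFoundedLT.fix fun p inv => (F 0)⁻¹ * ((Pi.single 0 1 : M → K) p -
    ∑ q ∈ ((Iic p).erase 0).attach, F q * inv (p - q) (tsub_lt_self_of_mem_erase_Iic q.2))

theorem cauchyInv_apply (F : M → K) (p : M) : cauchyInv F p =
    (F 0)⁻¹ * ((Pi.single 0 1 : M → K) p - ∑ q ∈ (Iic p).erase 0, F q * cauchyInv F (p - q)) := by
  rw [cauchyInv, WellFoundedLT.fix_eq, ← sum_attach ((Iic p).erase 0)]

theorem cauchyConv_cauchyInv (hF : F 0 ≠ 0) : cauchyConv F (cauchyInv F) = Pi.single 0 1 := by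
  funext p
  rw [cauchyConv_eq_add_sum_erase, cauchyInv_apply, mul_inv_cancel_left₀ hF, sub_add_cancel]

end CauchyConv

section Ohbar

variable {s r : ℕ} (hrs : r ≤ s)

def totalDeg (p : (Fin s → ℕ) × ℕ) : ℕ :=
  ∑ j, p.1 j + p.2

theorem totalDeg_add (p q : (Fin s → ℕ) × ℕ) : totalDeg (p + q) = totalDeg p + totalDeg q := by
  simp only [totalDeg, Prod.fst_add, Prod.snd_add, Pi.add_apply, sum_add_distrib]
  ring

theorem totalDeg_pos {p : (Fin s → ℕ) × ℕ} (hp : p ≠ 0) : 0 < totalDeg p := by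
  contrapose! hp
  rw [Nat.le_zero, totalDeg, Nat.add_eq_zero_iff, sum_eq_zero_iff] at hp
  exact Prod.ext (funext fun j => hp.1 j (mem_univ j)) hp.2

theorem card_Iic_le_two_pow_totalDeg (p : (Fin s → ℕ) × ℕ) : #(Iic p) ≤ 2 ^ totalDeg p := by
  rw [card_Iic_prod, Pi.card_Iic, totalDeg, pow_add, ← prod_pow_eq_pow_sum]
  simp only [Nat.card_Iic]
  exact Nat.mul_le_mul (prod_le_prod' fun j _ => Nat.lt_two_pow_self) Nat.lt_two_pow_self

theorem sum_Iic_pow_totalDeg_le {u : ℝ} (hu0 : 0 ≤ u) (hu : u ≤ 1 / 2) (p : (Fin s → ℕ) × ℕ) :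
    ∑ q ∈ Iic p, u ^ totalDeg q ≤ 2 ^ (s + 1) := by
  have geom (k : ℕ) : ∑ i ∈ Iic k, u ^ i ≤ 2 := by
    rw [← Nat.range_succ_eq_Iic, range_eq_Ico]
    calc _ ≤ u ^ 0 / (1 - u) := geom_sum_Ico_le_of_lt_one hu0 (by linarith)
      _ ≤ 2 := by rw [pow_zero, div_le_iff₀ (by linarith)]; linarith
  have hprod : ∑ m ∈ Iic p.1, u ^ ∑ j, m j = ∏ j, ∑ i ∈ Iic (p.1 j), u ^ i := by
    rw [prod_univ_sum]
    exact sum_congr rfl fun m _ => (prod_pow_eq_pow_sum _ _ _).symm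
  rw [Iic_prod_def, sum_product]
  simp only [totalDeg, pow_add, ← mul_sum, ← sum_mul]
  rw [hprod, pow_one]
  gcongr
  · calc _ ≤ ∏ _j : Fin s, (2 : ℝ) :=
          prod_le_prod (fun j _ => sum_nonneg fun i _ => pow_nonneg hu0 i) fun j _ => geom _
      _ = 2 ^ s := by simp
  · exact geom _

theorem weight0_add (m m' : Fin s → ℕ) :
    weight0 s r hrs (m + m') = weight0 s r hrs m + weight0 s r hrs m' := by
  simp [weight0, sum_add_distrib]

def ohbarWeight (C : ℝ) (p : (Fin s → ℕ) × ℕ) : ℝ :=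
  C ^ totalDeg p * (weight0 s r hrs p.1 : ℝ) ^ p.2

variable {C : ℝ}

theorem ohbarWeight_nonneg (hC : 0 ≤ C) (p : (Fin s → ℕ) × ℕ) : 0 ≤ ohbarWeight hrs C p := by
  unfold ohbarWeight
  positivity

theorem ohbarWeight_zero : ohbarWeight hrs C 0 = 1 := by
  simp [ohbarWeight, totalDeg]

theorem ohbarWeight_mul (c C : ℝ) (p : (Fin s → ℕ) × ℕ) :
    ohbarWeight hrs (c * C) p = c ^ totalDeg p * ohbarWeight hrs C p := by
  rw [ohbarWeight, ohbarWeight, mul_pow, mul_assoc]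

theorem ohbarWeight_le_of_le {C' : ℝ} (hC : 0 ≤ C) (h : C ≤ C') (p : (Fin s → ℕ) × ℕ) :
    ohbarWeight hrs C p ≤ ohbarWeight hrs C' p := by
  unfold ohbarWeight
  gcongr

theorem ohbarWeight_mul_le (hC : 0 ≤ C) (p q : (Fin s → ℕ) × ℕ) :
    ohbarWeight hrs C p * ohbarWeight hrs C q ≤ ohbarWeight hrs C (p + q) := by
  simp only [ohbarWeight, totalDeg_add, pow_add, Prod.fst_add, Prod.snd_add, weight0_add,
    Nat.cast_add]
  have hp : (0 : ℝ) ≤ weight0 s r hrs p.1 := Nat.cast_nonneg _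
  have hq : (0 : ℝ) ≤ weight0 s r hrs q.1 := Nat.cast_nonneg _
  calc _ = C ^ totalDeg p * C ^ totalDeg q *
        ((weight0 s r hrs p.1 : ℝ) ^ p.2 * (weight0 s r hrs q.1 : ℝ) ^ q.2) := by ring
    _ ≤ _ := by
      gcongr
      · exact le_add_of_nonneg_right hq
      · exact le_add_of_nonneg_left hp

end Ohbar

section OhbarSupport

variable {s : ℕ} {𝕜 : Type*} [NormedField 𝕜] {F G : (Fin s → ℕ) × ℕ → 𝕜}

theorem exists_bound_of_finite_support (hF : ∀ m, {n | F (m, n) ≠ 0}.Finite) (m : Fin s → ℕ) :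
    ∃ N, ∀ q : (Fin s → ℕ) × ℕ, q.1 ≤ m → F q ≠ 0 → q.2 ≤ N := by
  obtain ⟨N, hN⟩ := ((Set.finite_Iic m).biUnion fun m' _ => hF m').bddAbove
  exact ⟨N, fun q hq hFq => hN (Set.mem_biUnion (x := q.1) hq hFq)⟩

theorem finite_support_cauchyConv (hF : ∀ m, {n | F (m, n) ≠ 0}.Finite)
    (hG : ∀ m, {n | G (m, n) ≠ 0}.Finite) (m : Fin s → ℕ) :
    {n | cauchyConv F G (m, n) ≠ 0}.Finite := by
  obtain ⟨NF, hNF⟩ := exists_bound_of_finite_support hF m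
  obtain ⟨NG, hNG⟩ := exists_bound_of_finite_support hG m
  refine (Set.finite_Iic (NF + NG)).subset fun n hn => ?_
  obtain ⟨q, hq, hne⟩ := exists_ne_zero_of_sum_ne_zero hn
  obtain ⟨hFq, hGq⟩ := mul_ne_zero_iff.1 hne
  have hqF := hNF q (mem_Iic.1 hq).1 hFq
  have hqG := hNG _ tsub_le_self hGq
  have hqn := (mem_Iic.1 hq).2
  simp only [Prod.snd_sub] at hqG
  simp only [Set.mem_Iic]
  omega

theorem finite_support_of_cauchyConv_eq_single (hF : ∀ m, {n | F (m, n) ≠ 0}.Finite)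
    (hF_axis : ∀ n, 0 < n → F (0, n) = 0) (hF0 : F 0 ≠ 0)
    (h : cauchyConv F G = Pi.single 0 1) (m : Fin s → ℕ) : {n | G (m, n) ≠ 0}.Finite := by
  obtain ⟨N, hN⟩ := exists_bound_of_finite_support hF m
  suffices key : ∀ p : (Fin s → ℕ) × ℕ, p.1 ≤ m → G p ≠ 0 → p.2 ≤ N * ∑ j, p.1 j from
    (Set.finite_Iic (N * ∑ j, m j)).subset fun n hn => key (m, n) le_rfl hn
  intro p
  induction p using WellFoundedLT.induction with
  | ind p ih =>
    intro hpm hGp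
    rcases eq_or_ne p 0 with rfl | hp
    · simp
    have hsum := mul_eq_neg_sum_of_cauchyConv_eq_single h hp
    obtain ⟨⟨q1, q2⟩, hq, hne⟩ := exists_ne_zero_of_sum_ne_zero
      (neg_ne_zero.1 (hsum ▸ mul_ne_zero hF0 hGp))
    obtain ⟨hFq, hGq⟩ := mul_ne_zero_iff.1 hne
    obtain ⟨hq0, hqp⟩ := mem_erase.1 hq
    have hqp : (q1, q2) ≤ p := mem_Iic.1 hqp
    -- `F` vanishes on `{0} × ℕ₊`, so each step of the recursion lowers `∑ j, p.1 j`.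
    have hq1 : 0 < ∑ j, q1 j := by
      refine Nat.pos_of_ne_zero fun h0 => hFq ?_
      obtain rfl : q1 = 0 := funext fun j => sum_eq_zero_iff.1 h0 j (mem_univ j)
      exact hF_axis q2 (Nat.pos_of_ne_zero fun h2 => hq0 (by rw [h2]; rfl))
    have hq2 : q2 ≤ N := hN _ (hqp.1.trans hpm) hFq
    have hrest := ih _ (tsub_lt_self_of_mem_erase_Iic hq) (tsub_le_self.trans hpm) hGq
    have hsplit := congrArg (fun x : (Fin s → ℕ) × ℕ => (∑ j, x.1 j, x.2))
      (add_tsub_cancel_of_le hqp)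
    simp only [Prod.fst_add, Prod.snd_add, Pi.add_apply, sum_add_distrib, Prod.mk.injEq] at hsplit
    rw [← hsplit.1, ← hsplit.2]
    nlinarith

end OhbarSupport

section OhbarBounds

variable {s r : ℕ} (hrs : r ≤ s) {𝕜 : Type*} [NormedField 𝕜] {F G : (Fin s → ℕ) × ℕ → 𝕜}
  {B C : ℝ}

theorem apply_eq_zero_of_weight0_eq_zero (hF : ∀ p, ‖F p‖ ≤ B * ohbarWeight hrs C p)
    {p : (Fin s → ℕ) × ℕ} (hw : weight0 s r hrs p.1 = 0) (hn : 0 < p.2) : F p = 0 := by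
  have hp := hF p
  rw [ohbarWeight, hw, Nat.cast_zero, zero_pow hn.ne', mul_zero, mul_zero] at hp
  exact norm_le_zero_iff.1 hp

theorem nonneg_of_norm_le_mul_ohbarWeight (hF : ∀ p, ‖F p‖ ≤ B * ohbarWeight hrs C p) : 0 ≤ B := by
  simpa [ohbarWeight_zero] using (norm_nonneg _).trans (hF 0)

theorem norm_cauchyConv_le {B' : ℝ} (hC : 0 ≤ C) (hF : ∀ p, ‖F p‖ ≤ B * ohbarWeight hrs C p)
    (hG : ∀ p, ‖G p‖ ≤ B' * ohbarWeight hrs C p) (p : (Fin s → ℕ) × ℕ) :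
    ‖cauchyConv F G p‖ ≤ B * B' * ohbarWeight hrs (2 * C) p := by
  have hB := nonneg_of_norm_le_mul_ohbarWeight hrs hF
  have hB' := nonneg_of_norm_le_mul_ohbarWeight hrs hG
  have hterm : ∀ q ∈ Iic p, ‖F q * G (p - q)‖ ≤ B * B' * ohbarWeight hrs C p := by
    intro q hq
    calc ‖F q * G (p - q)‖
        ≤ (B * ohbarWeight hrs C q) * (B' * ohbarWeight hrs C (p - q)) := by
          rw [norm_mul]
          exact mul_le_mul (hF q) (hG _) (norm_nonneg _) ((norm_nonneg _).trans (hF q))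
      _ = B * B' * (ohbarWeight hrs C q * ohbarWeight hrs C (p - q)) := by ring
      _ ≤ B * B' * ohbarWeight hrs C p := by
          grw [ohbarWeight_mul_le hrs hC, add_tsub_cancel_of_le (mem_Iic.1 hq)]
  calc ‖cauchyConv F G p‖ ≤ #(Iic p) * (B * B' * ohbarWeight hrs C p) := by
        rw [← nsmul_eq_mul]
        exact norm_sum_le_of_le _ hterm |>.trans_eq (sum_const _)
    _ ≤ 2 ^ totalDeg p * (B * B' * ohbarWeight hrs C p) := by
        gcongr
        · exact mul_nonneg (mul_nonneg hB hB') (ohbarWeight_nonneg hrs hC p)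
        · exact_mod_cast card_Iic_le_two_pow_totalDeg p
    _ = B * B' * ohbarWeight hrs (2 * C) p := by
        rw [ohbarWeight_mul]
        ring

theorem norm_le_of_cauchyConv_eq_single {u D : ℝ} (hu0 : 0 < u) (hu : u ≤ 1 / 2) (hD : 0 ≤ D)
    (hBu : B * u * 2 ^ (s + 1) ≤ ‖F 0‖) (hF : ∀ p, ‖F p‖ ≤ B * ohbarWeight hrs (u ^ 2 * D) p)
    (hF0 : F 0 ≠ 0) (h : cauchyConv F G = Pi.single 0 1) (p : (Fin s → ℕ) × ℕ) :
    ‖G p‖ ≤ ‖F 0‖⁻¹ * ohbarWeight hrs D p := by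
  have hB := nonneg_of_norm_le_mul_ohbarWeight hrs hF
  have hF0_pos : 0 < ‖F 0‖ := norm_pos_iff.2 hF0
  induction p using WellFoundedLT.induction with
  | ind p ih =>
    rcases eq_or_ne p 0 with rfl | hp
    · have h0 := congrFun h 0
      rw [cauchyConv_apply_zero, Pi.single_eq_same] at h0
      rw [eq_inv_of_mul_eq_one_right h0, norm_inv, ohbarWeight_zero, mul_one]
    set c := B * ‖F 0‖⁻¹ * u * ohbarWeight hrs D p
    have hterm : ∀ q ∈ (Iic p).erase 0, ‖F q * G (p - q)‖ ≤ c * u ^ totalDeg q := by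
      intro q hq
      have hdeg : totalDeg q ≠ 0 := (totalDeg_pos (ne_of_mem_erase hq)).ne'
      have hu_pow : u ^ totalDeg q ≤ u := pow_le_of_le_one hu0.le (by linarith) hdeg
      calc ‖F q * G (p - q)‖
          ≤ (B * ohbarWeight hrs (u ^ 2 * D) q) * (‖F 0‖⁻¹ * ohbarWeight hrs D (p - q)) := by
            rw [norm_mul]
            exact mul_le_mul (hF q) (ih _ (tsub_lt_self_of_mem_erase_Iic hq)) (norm_nonneg _)
              ((norm_nonneg _).trans (hF q))
        _ = B * ‖F 0‖⁻¹ * (u ^ totalDeg q * u ^ totalDeg q) *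
              (ohbarWeight hrs D q * ohbarWeight hrs D (p - q)) := by
            rw [ohbarWeight_mul, ← pow_mul, mul_comm 2, pow_mul, sq]
            ring
        _ ≤ B * ‖F 0‖⁻¹ * (u * u ^ totalDeg q) * ohbarWeight hrs D p := by
            have hqp := add_tsub_cancel_of_le (mem_Iic.1 (mem_of_mem_erase hq))
            grw [hu_pow, ohbarWeight_mul_le hrs hD, hqp]
            exact mul_nonneg (ohbarWeight_nonneg hrs hD q) (ohbarWeight_nonneg hrs hD _)
        _ = c * u ^ totalDeg q := by ring
    have hc : 0 ≤ c := by positivity [ohbarWeight_nonneg hrs hD p]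
    rw [le_inv_mul_iff₀ hF0_pos, ← norm_mul, mul_eq_neg_sum_of_cauchyConv_eq_single h hp, norm_neg]
    calc _ ≤ ∑ q ∈ (Iic p).erase 0, c * u ^ totalDeg q := norm_sum_le_of_le _ hterm
      _ ≤ ∑ q ∈ Iic p, c * u ^ totalDeg q :=
          sum_le_sum_of_subset_of_nonneg (erase_subset _ _) fun _ _ _ => by positivity
      _ ≤ c * 2 ^ (s + 1) := by
          rw [← mul_sum]
          exact mul_le_mul_of_nonneg_left (sum_Iic_pow_totalDeg_le hu0.le hu p) hc
      _ = B * u * 2 ^ (s + 1) * ‖F 0‖⁻¹ * ohbarWeight hrs D p := by ring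
      _ ≤ ‖F 0‖ * ‖F 0‖⁻¹ * ohbarWeight hrs D p := by
          gcongr
          exact ohbarWeight_nonneg hrs hD p
      _ = ohbarWeight hrs D p := by rw [mul_inv_cancel₀ hF0_pos.ne', one_mul]

theorem exists_norm_le_of_cauchyConv_eq_single (hB : 0 < B) (hC : 0 < C)
    (hF : ∀ p, ‖F p‖ ≤ B * ohbarWeight hrs C p) (hF0 : F 0 ≠ 0)
    (h : cauchyConv F G = Pi.single 0 1) :
    ∃ B' C' : ℝ, 0 < B' ∧ 0 < C' ∧ ∀ p, ‖G p‖ ≤ B' * ohbarWeight hrs C' p := by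
  have hF0_pos : 0 < ‖F 0‖ := norm_pos_iff.2 hF0
  set u := min (1 / 2) (‖F 0‖ / (B * 2 ^ (s + 1)))
  have hu0 : 0 < u := lt_min (by norm_num) (by positivity)
  have hBu : B * u * 2 ^ (s + 1) ≤ ‖F 0‖ := by
    have := (le_div_iff₀ (by positivity)).1 (min_le_right (1 / 2) (‖F 0‖ / (B * 2 ^ (s + 1))))
    linarith
  refine ⟨‖F 0‖⁻¹, C / u ^ 2, by positivity, by positivity,
    norm_le_of_cauchyConv_eq_single hrs hu0 (min_le_left _ _) (by positivity) hBu ?_ hF0 h⟩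
  rwa [mul_div_cancel₀ _ (by positivity)]

end OhbarBounds

section IsOhbar

variable {s r : ℕ} (hrs : r ≤ s) {𝕜 : Type*} [NormedField 𝕜] {F G : (Fin s → ℕ) × ℕ → 𝕜}

/-- `MemOhbar` for uncurried families, without condition (i), which the bound forces
(`apply_eq_zero_of_weight0_eq_zero`). -/
structure IsOhbar (F : (Fin s → ℕ) × ℕ → 𝕜) : Prop where
  finite_support : ∀ m, {n | F (m, n) ≠ 0}.Finite
  exists_bound : ∃ B C : ℝ, 0 < B ∧ 0 < C ∧ ∀ p, ‖F p‖ ≤ B * ohbarWeight hrs C p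

variable {hrs}

theorem IsOhbar.cauchyConv (hF : IsOhbar hrs F) (hG : IsOhbar hrs G) :
    IsOhbar hrs (cauchyConv F G) where
  finite_support := finite_support_cauchyConv hF.finite_support hG.finite_support
  exists_bound := by
    obtain ⟨B, C, hB, hC, hFB⟩ := hF.exists_bound
    obtain ⟨B', C', hB', hC', hGB⟩ := hG.exists_bound
    have hC'' : 0 < max C C' := lt_max_of_lt_left hC
    refine ⟨B * B', 2 * max C C', by positivity, by positivity,
      norm_cauchyConv_le hrs hC''.le (fun p => ?_) (fun p => ?_)⟩
    · grw [hFB p, ohbarWeight_le_of_le hrs hC.le (le_max_left C C')]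
    · grw [hGB p, ohbarWeight_le_of_le hrs hC'.le (le_max_right C C')]

theorem IsOhbar.cauchyInv (hF : IsOhbar hrs F) (hF0 : F 0 ≠ 0) : IsOhbar hrs (cauchyInv F) := by
  obtain ⟨B, C, hB, hC, hFB⟩ := hF.exists_bound
  have hinv := cauchyConv_cauchyInv hF0
  refine ⟨finite_support_of_cauchyConv_eq_single hF.finite_support (fun n hn => ?_) hF0 hinv,
    exists_norm_le_of_cauchyConv_eq_single hrs hB hC hFB hF0 hinv⟩
  exact apply_eq_zero_of_weight0_eq_zero hrs hFB (p := (0, n)) (by simp [weight0]) hn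

end IsOhbar

theorem memOhbar_iff {s r : ℕ} {hrs : r ≤ s} {A : (Fin s → ℕ) → ℕ → ℂ} :
    MemOhbar s r hrs A ↔ IsOhbar hrs (uncurry A) := by
  constructor
  · rintro ⟨hA0, -, B, C, hB, hC, hAB⟩
    exact ⟨hA0, B, C, hB, hC, fun p => (hAB p.1 p.2).trans_eq (mul_assoc _ _ _)⟩
  · rintro ⟨hA0, B, C, hB, hC, hAB⟩
    exact ⟨hA0, fun m n hw hn => apply_eq_zero_of_weight0_eq_zero hrs hAB (p := (m, n)) hw hn,
      B, C, hB, hC, fun m n => (hAB (m, n)).trans_eq (mul_assoc _ _ _).symm⟩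

theorem uncurry_cauchyProdN (s : ℕ) (A B : (Fin s → ℕ) → ℕ → ℂ) :
    uncurry (cauchyProdN s A B) = cauchyConv (uncurry A) (uncurry B) := by
  funext ⟨m, n⟩
  rw [uncurry_apply_pair, cauchyProdN, cauchyConv, tsum_eq_sum (s := Iic (m, n))]
  · exact sum_congr rfl fun q hq => if_pos (mem_Iic.1 hq)
  · exact fun q hq => if_neg (mt mem_Iic.2 hq)

theorem uncurry_deltaFam (s : ℕ) : uncurry (deltaFam s) = Pi.single 0 1 := by
  funext ⟨m, n⟩
  simp [deltaFam, Pi.single_apply, Prod.mk_eq_zero]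

theorem memOhbar_localRing_general (s r : ℕ) (hrs : r ≤ s) :
    (∀ A B : (Fin s → ℕ) → ℕ → ℂ, MemOhbar s r hrs A → MemOhbar s r hrs B →
      MemOhbar s r hrs (cauchyProdN s A B)) ∧
    (∀ A : (Fin s → ℕ) → ℕ → ℂ, MemOhbar s r hrs A → A 0 0 ≠ 0 →
      ∃ A' : (Fin s → ℕ) → ℕ → ℂ,
        cauchyProdN s A A' = deltaFam s ∧ MemOhbar s r hrs A' ∧
        ∀ A'' : (Fin s → ℕ) → ℕ → ℂ, cauchyProdN s A A'' = deltaFam s → A'' = A') := by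
  refine ⟨fun A B hA hB => ?_, fun A hA hA0 => ?_⟩
  · rw [memOhbar_iff] at hA hB ⊢
    rw [uncurry_cauchyProdN]
    exact hA.cauchyConv hB
  · have hinv := cauchyConv_cauchyInv (F := uncurry A) hA0
    refine ⟨curry (cauchyInv (uncurry A)), ?_, ?_, fun A'' hA'' => ?_⟩
    · apply uncurry_injective
      rw [uncurry_cauchyProdN, uncurry_curry, hinv, uncurry_deltaFam]
    · rw [memOhbar_iff, uncurry_curry]
      exact (memOhbar_iff.1 hA).cauchyInv hA0
    · apply uncurry_injective
      rw [uncurry_curry]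
      apply cauchyConv_injective (F := uncurry A) hA0
      rw [← uncurry_cauchyProdN, hA'', uncurry_deltaFam, hinv]

/-- The class `𝒪^{ℏ}` is a local ring: it is closed under the Cauchy product,
and every `A ∈ 𝒪^{ℏ}` with `A(0,0) ≠ 0` has its Cauchy-product inverse again in `𝒪^{ℏ}`. -/
theorem memOhbar_localRing (s r : ℕ) (hr : 1 ≤ r) (hrs : r ≤ s) :
    (∀ A B : (Fin s → ℕ) → ℕ → ℂ, MemOhbar s r hrs A → MemOhbar s r hrs B →
      MemOhbar s r hrs (cauchyProdN s A B)) ∧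
    (∀ A : (Fin s → ℕ) → ℕ → ℂ, MemOhbar s r hrs A → A 0 0 ≠ 0 →
      ∃ A' : (Fin s → ℕ) → ℕ → ℂ,
        cauchyProdN s A A' = deltaFam s ∧ MemOhbar s r hrs A' ∧
        ∀ A'' : (Fin s → ℕ) → ℕ → ℂ, cauchyProdN s A A'' = deltaFam s → A'' = A') :=
  memOhbar_localRing_general s r hrs
end

section
/- Fix an integer r ≥ 1 and integers ν₁,…,ν_r. Say that a family (A_d)_{d∈ℕ^r} of complex Laurent polynomials A_d ∈ ℂ[ℏ, ℏ⁻¹] belongs to the class 𝒪_deg^{ℏ,ℏ⁻¹} if there exist constants B, C > 0 such that sup_{|ℏ|=1} |A_d(ℏ)| ≤ B·C^{|d|}/⟨ν,d⟩! whenever ⟨ν,d⟩ ≥ 0 and sup_{|ℏ|=1} |A_d(ℏ)| ≤ B·C^{|d|}·(−⟨ν,d⟩)! whenever ⟨ν,d⟩ ≤ 0. Then 𝒪_deg^{ℏ,ℏ⁻¹} is closed under the Cauchy product: if (A_d) and (B_d) belong to the class, so does (Σ_{d₁+d₂=d} A_{d₁} B_{d₂})_d; hence 𝒪_deg^{ℏ,ℏ⁻¹}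 is a subring of the ring of formal power series in q₁,…,q_r with coefficients in ℂ[ℏ,ℏ⁻¹]. -/
/-!
Evaluation at `ℏ` with `|ℏ| = 1` is a ring homomorphism, so only sums and products of complex
numbers need bounding. Merging the two cases of the definition into one weight
`w(m) = 1/m!` (`m ≥ 0`), `w(m) = |m|!` (`m ≤ 0`), the binomial bounds
`a! b! ≤ (a+b)! ≤ 2^(a+b) a! b!` give `w(m₁) w(m₂) ≤ 2^(|m₁|+|m₂|) w(m₁+m₂)`. Since
`|⟨ν,d⟩| ≤ (∑ |ν_a|) |d|` and the Cauchy product at `d` has at most `2^|d|` terms, the product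
class bound holds with `C` replaced by `2 · 2^(∑ |ν_a|) · C`.
-/

open scoped BigOperators

/-- Evaluation of a complex Laurent polynomial at a (nonzero) complex number. -/
noncomputable def laurentEval (f : LaurentPolynomial ℂ) (z : ℂ) : ℂ :=
  Finsupp.sum (AddMonoidAlgebra.coeff f : ℤ →₀ ℂ) fun n c => c * z ^ n

/-- Membership in the class `𝒪_deg^{ℏ,ℏ⁻¹}`: a family of Laurent polynomials `(A_d)_{d ∈ ℕ^r}`
belongs to the class if there are `B, C > 0` with
`sup_{|ℏ|=1} |A_d(ℏ)| ≤ B C^{|d|}/⟨ν,d⟩!` when `⟨ν,d⟩ ≥ 0` and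
`sup_{|ℏ|=1} |A_d(ℏ)| ≤ B C^{|d|} (-⟨ν,d⟩)!` when `⟨ν,d⟩ ≤ 0`. -/
def MemODeg (r : ℕ) (ν : Fin r → ℤ) (A : (Fin r → ℕ) → LaurentPolynomial ℂ) : Prop :=
  ∃ B C : ℝ, 0 < B ∧ 0 < C ∧ ∀ (d : Fin r → ℕ) (z : ℂ), ‖z‖ = 1 →
    (0 ≤ ∑ a, ν a * (d a : ℤ) →
      ‖laurentEval (A d) z‖
        ≤ B * C ^ (∑ a, d a) / (Nat.factorial (∑ a, ν a * (d a : ℤ)).toNat : ℝ)) ∧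
    ((∑ a, ν a * (d a : ℤ)) ≤ 0 →
      ‖laurentEval (A d) z‖
        ≤ B * C ^ (∑ a, d a) * (Nat.factorial (∑ a, ν a * (d a : ℤ)).natAbs : ℝ))

/-- The Cauchy product `(A · B)_d = ∑_{d₁ + d₂ = d} A_{d₁} B_{d₂}` of two families of Laurent
polynomials (product in `ℂ[ℏ, ℏ⁻¹]`). -/
noncomputable def cauchyProdL (r : ℕ) (A B : (Fin r → ℕ) → LaurentPolynomial ℂ)
    (d : Fin r → ℕ) : LaurentPolynomial ℂ :=
  ∑ x ∈ Fintype.piFinset (fun i => Finset.range (d i + 1)),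
    A x * B (fun i => d i - x i)

open Finset LaurentPolynomial
open scoped Nat

theorem laurentEval_add (f g : LaurentPolynomial ℂ) (z : ℂ) :
    laurentEval (f + g) z = laurentEval f z + laurentEval g z :=
  Finsupp.sum_add_index' (fun _ => zero_mul _) fun _ _ _ => add_mul _ _ _

theorem laurentEval_eq_eval₂ (f : LaurentPolynomial ℂ) {z : ℂ} (hz : z ≠ 0) :
    laurentEval f z = eval₂ (RingHom.id ℂ) (Units.mk0 z hz) f := by
  induction f using LaurentPolynomial.induction_on' with
  | add p q hp hq => rw [map_add, laurentEval_add, hp, hq]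
  | C_mul_T n c =>
    rw [eval₂_C_mul_T, ← single_eq_C_mul_T, laurentEval, AddMonoidAlgebra.coeff_single]
    simp

theorem laurentEval_mul (f g : LaurentPolynomial ℂ) {z : ℂ} (hz : z ≠ 0) :
    laurentEval (f * g) z = laurentEval f z * laurentEval g z := by
  simp only [laurentEval_eq_eval₂ _ hz, map_mul]

theorem laurentEval_sum {ι : Type*} (s : Finset ι) (f : ι → LaurentPolynomial ℂ) {z : ℂ}
    (hz : z ≠ 0) : laurentEval (∑ i ∈ s, f i) z = ∑ i ∈ s, laurentEval (f i) z := by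
  simp only [laurentEval_eq_eval₂ _ hz, map_sum]

theorem factorial_add_le_two_pow_mul (a b : ℕ) : (a + b)! ≤ 2 ^ (a + b) * (a ! * b !) := by
  rw [← Nat.add_choose_mul_factorial_mul_factorial, mul_assoc]
  exact Nat.mul_le_mul_right _ (Nat.choose_le_two_pow _ _)

theorem factorial_mul_factorial_le_factorial_add (a b : ℕ) : a ! * b ! ≤ (a + b)! :=
  Nat.le_of_dvd (Nat.factorial_pos _) (Nat.factorial_mul_factorial_dvd_factorial_add a b)

noncomputable def degWeight (m : ℤ) : ℝ :=
  if 0 ≤ m then ((m.toNat)! : ℝ)⁻¹ else (m.natAbs ! : ℝ)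

theorem degWeight_zero : degWeight 0 = 1 := by
  simp [degWeight]

theorem degWeight_natCast (n : ℕ) : degWeight n = ((n ! : ℕ) : ℝ)⁻¹ := by
  simp [degWeight]

theorem degWeight_neg_natCast (n : ℕ) : degWeight (-n) = (n ! : ℕ) := by
  rcases Nat.eq_zero_or_pos n with rfl | hn
  · simp [degWeight]
  · simp [degWeight, hn.ne']

theorem degWeight_pos (m : ℤ) : 0 < degWeight m := by
  unfold degWeight; split <;> positivity

theorem le_mul_degWeight_iff {x K : ℝ} (m : ℤ) :
    ((0 ≤ m → x ≤ K / (m.toNat ! : ℝ)) ∧ (m ≤ 0 → x ≤ K * (m.natAbs ! : ℝ))) ↔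
      x ≤ K * degWeight m := by
  obtain ⟨n, rfl | rfl⟩ := Int.eq_nat_or_neg m <;> rcases Nat.eq_zero_or_pos n with rfl | hn <;>
    simp [degWeight_zero, degWeight_natCast, degWeight_neg_natCast, div_eq_mul_inv, *,
      Nat.pos_iff_ne_zero.mp]

theorem degWeight_natCast_mul_degWeight_neg_le (a b : ℕ) :
    degWeight a * degWeight (-b) ≤ 2 ^ (a + b) * degWeight (a + -b) := by
  rw [degWeight_natCast, degWeight_neg_natCast]
  rcases le_total b a with hba | hab
  · obtain ⟨c, rfl⟩ := Nat.exists_eq_add_of_le hba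
    have hc : ((b + c : ℕ) : ℤ) + -b = c := by push_cast; ring
    rw [hc, degWeight_natCast, inv_mul_le_iff₀ (by positivity)]
    calc (b ! : ℝ) ≤ (b + c)! * ((c ! : ℕ) : ℝ)⁻¹ := by
          rw [le_mul_inv_iff₀ (by positivity)]
          exact_mod_cast factorial_mul_factorial_le_factorial_add b c
      _ ≤ (b + c)! * (2 ^ (b + c + b) * ((c ! : ℕ) : ℝ)⁻¹) := by
          gcongr
          exact le_mul_of_one_le_left (by positivity) (one_le_pow₀ one_le_two)
  · obtain ⟨c, rfl⟩ := Nat.exists_eq_add_of_le hab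
    have hc : (a : ℤ) + -((a + c : ℕ) : ℤ) = -c := by push_cast; ring
    rw [hc, degWeight_neg_natCast, inv_mul_le_iff₀ (by positivity)]
    calc ((a + c)! : ℝ) ≤ 2 ^ (a + c) * (a ! * c !) := by
          exact_mod_cast factorial_add_le_two_pow_mul a c
      _ ≤ 2 ^ (a + (a + c)) * (a ! * c !) := by
          gcongr
          · norm_num
          · omega
      _ = _ := by ring

theorem degWeight_mul_le (m₁ m₂ : ℤ) :
    degWeight m₁ * degWeight m₂ ≤ 2 ^ (m₁.natAbs + m₂.natAbs) * degWeight (m₁ + m₂) := by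
  obtain ⟨a, rfl | rfl⟩ := Int.eq_nat_or_neg m₁ <;> obtain ⟨b, rfl | rfl⟩ := Int.eq_nat_or_neg m₂
  · rw [← Nat.cast_add, degWeight_natCast, degWeight_natCast, degWeight_natCast]
    field_simp
    simp only [Int.natAbs_natCast]
    exact_mod_cast (factorial_add_le_two_pow_mul a b).trans_eq (mul_comm _ _)
  · simpa using degWeight_natCast_mul_degWeight_neg_le a b
  · simpa [mul_comm, add_comm] using degWeight_natCast_mul_degWeight_neg_le b a
  · rw [← neg_add, ← Nat.cast_add, degWeight_neg_natCast, degWeight_neg_natCast,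
      degWeight_neg_natCast]
    simp only [Int.natAbs_neg, Int.natAbs_natCast]
    calc ((a ! : ℕ) : ℝ) * (b ! : ℕ) ≤ ((a + b)! : ℕ) := by
          exact_mod_cast factorial_mul_factorial_le_factorial_add a b
      _ ≤ 2 ^ (a + b) * ((a + b)! : ℕ) :=
          le_mul_of_one_le_left (by positivity) (one_le_pow₀ one_le_two)

theorem natAbs_sum_mul_le {ι : Type*} [Fintype ι] (ν : ι → ℤ) (d : ι → ℕ) :
    (∑ a, ν a * (d a : ℤ)).natAbs ≤ (∑ a, (ν a).natAbs) * ∑ a, d a := by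
  refine (Int.natAbs_sum_le _ _).trans ?_
  simp only [Int.natAbs_mul, Int.natAbs_natCast, Finset.mul_sum]
  exact sum_le_sum fun a _ => Nat.mul_le_mul_right _ <|
    single_le_sum (f := fun b => (ν b).natAbs) (fun _ _ => Nat.zero_le _) (mem_univ a)

theorem card_piFinset_range_le {ι : Type*} [Fintype ι] [DecidableEq ι] (d : ι → ℕ) :
    #(Fintype.piFinset fun i => range (d i + 1)) ≤ 2 ^ ∑ i, d i := by
  rw [Fintype.card_piFinset, ← Finset.prod_pow_eq_pow_sum]
  exact Finset.prod_le_prod' fun i _ => (card_range _).trans_le Nat.lt_two_pow_self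

section ODegBound

variable {r : ℕ} {ν : Fin r → ℤ} {A B : (Fin r → ℕ) → LaurentPolynomial ℂ} {K K₁ K₂ C : ℝ}

def ODegBound (ν : Fin r → ℤ) (A : (Fin r → ℕ) → LaurentPolynomial ℂ) (K C : ℝ) : Prop :=
  ∀ (d : Fin r → ℕ) (z : ℂ), ‖z‖ = 1 →
    ‖laurentEval (A d) z‖ ≤ K * C ^ (∑ a, d a) * degWeight (∑ a, ν a * (d a : ℤ))

theorem memODeg_iff_exists_oDegBound :
    MemODeg r ν A ↔ ∃ K C : ℝ, 0 < K ∧ 0 < C ∧ ODegBound ν A K C := by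
  simp only [MemODeg, ODegBound, le_mul_degWeight_iff]

theorem ODegBound.mono {C' : ℝ} (h : ODegBound ν A K C) (hK : 0 ≤ K) (hC : 0 ≤ C)
    (hCC' : C ≤ C') : ODegBound ν A K C' := fun d z hz =>
  (h d z hz).trans <| by have := degWeight_pos (∑ a, ν a * (d a : ℤ)); gcongr

theorem ODegBound.add (hA : ODegBound ν A K₁ C) (hB : ODegBound ν B K₂ C) :
    ODegBound ν (fun d => A d + B d) (K₁ + K₂) C := fun d z hz =>
  calc ‖laurentEval (A d + B d) z‖ ≤ ‖laurentEval (A d) z‖ + ‖laurentEval (B d) z‖ := by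
        rw [laurentEval_add]; exact norm_add_le _ _
    _ ≤ _ := (add_le_add (hA d z hz) (hB d z hz)).trans_eq (by ring)

theorem ODegBound.norm_laurentEval_mul_le (hA : ODegBound ν A K₁ C) (hB : ODegBound ν B K₂ C)
    (hK₁ : 0 ≤ K₁) (hK₂ : 0 ≤ K₂) (hC : 0 ≤ C) {x y d : Fin r → ℕ} (hxy : x + y = d) {z : ℂ}
    (hz : ‖z‖ = 1) :
    ‖laurentEval (A x * B y) z‖ ≤
      K₁ * K₂ * (2 ^ (∑ a, (ν a).natAbs) * C) ^ (∑ a, d a) *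
        degWeight (∑ a, ν a * (d a : ℤ)) := by
  subst hxy
  set M := ∑ a, (ν a).natAbs
  set m₁ := ∑ a, ν a * (x a : ℤ)
  set m₂ := ∑ a, ν a * (y a : ℤ)
  have hdeg : ∑ a, (x + y) a = ∑ a, x a + ∑ a, y a := sum_add_distrib
  have hpair : ∑ a, ν a * ((x + y) a : ℤ) = m₁ + m₂ := by
    simp only [Pi.add_apply, Nat.cast_add, mul_add, sum_add_distrib, m₁, m₂]
  have hexp : m₁.natAbs + m₂.natAbs ≤ M * ∑ a, (x + y) a := by
    rw [hdeg, mul_add]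
    exact add_le_add (natAbs_sum_mul_le ν x) (natAbs_sum_mul_le ν y)
  rw [laurentEval_mul _ _ (norm_ne_zero_iff.mp (hz ▸ one_ne_zero)), norm_mul, hpair]
  calc ‖laurentEval (A x) z‖ * ‖laurentEval (B y) z‖
      ≤ (K₁ * C ^ (∑ a, x a) * degWeight m₁) * (K₂ * C ^ (∑ a, y a) * degWeight m₂) :=
        mul_le_mul (hA x z hz) (hB y z hz) (norm_nonneg _)
          (mul_nonneg (by positivity) (degWeight_pos _).le)
    _ = K₁ * K₂ * C ^ (∑ a, (x + y) a) * (degWeight m₁ * degWeight m₂) := by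
        rw [hdeg, pow_add]; ring
    _ ≤ K₁ * K₂ * C ^ (∑ a, (x + y) a) * (2 ^ (M * ∑ a, (x + y) a) * degWeight (m₁ + m₂)) := by
        refine mul_le_mul_of_nonneg_left ((degWeight_mul_le m₁ m₂).trans ?_) (by positivity)
        gcongr
        · exact (degWeight_pos _).le
        · norm_num
    _ = _ := by rw [mul_pow, pow_mul]; ring

theorem ODegBound.cauchyProd (hA : ODegBound ν A K₁ C) (hB : ODegBound ν B K₂ C)
    (hK₁ : 0 ≤ K₁) (hK₂ : 0 ≤ K₂) (hC : 0 ≤ C) :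
    ODegBound ν (cauchyProdL r A B) (K₁ * K₂) (2 * 2 ^ (∑ a, (ν a).natAbs) * C) := by
  intro d z hz
  set s := Fintype.piFinset fun i => range (d i + 1)
  set bound := K₁ * K₂ * (2 ^ (∑ a, (ν a).natAbs) * C) ^ (∑ a, d a) *
    degWeight (∑ a, ν a * (d a : ℤ))
  have hterm : ∀ x ∈ s, ‖laurentEval (A x * B fun i => d i - x i) z‖ ≤ bound := by
    intro x hx
    refine hA.norm_laurentEval_mul_le hB hK₁ hK₂ hC (funext fun i => ?_) hz
    have hxd := mem_range.1 (Fintype.mem_piFinset.1 hx i)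
    simp only [Pi.add_apply]
    omega
  have hbound : 0 ≤ bound := mul_nonneg (by positivity) (degWeight_pos _).le
  calc ‖laurentEval (cauchyProdL r A B d) z‖
      ≤ ∑ x ∈ s, ‖laurentEval (A x * B fun i => d i - x i) z‖ := by
        rw [_root_.cauchyProdL, laurentEval_sum _ _ (norm_ne_zero_iff.mp (hz ▸ one_ne_zero))]
        exact norm_sum_le _ _
    _ ≤ #s * bound := by simpa using sum_le_card_nsmul s _ _ hterm
    _ ≤ 2 ^ (∑ a, d a) * bound := by
        gcongr
        exact_mod_cast card_piFinset_range_le d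
    _ = _ := by simp only [bound]; rw [mul_assoc 2, mul_pow]; ring

end ODegBound

theorem memODeg_subring_general (r : ℕ) (ν : Fin r → ℤ)
    (A B : (Fin r → ℕ) → LaurentPolynomial ℂ)
    (hA : MemODeg r ν A) (hB : MemODeg r ν B) :
    MemODeg r ν (fun d => A d + B d) ∧ MemODeg r ν (cauchyProdL r A B) := by
  obtain ⟨K₁, C₁, hK₁, hC₁, hA⟩ := memODeg_iff_exists_oDegBound.1 hA
  obtain ⟨K₂, C₂, hK₂, hC₂, hB⟩ := memODeg_iff_exists_oDegBound.1 hB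
  set C := max C₁ C₂
  have hC : 0 < C := lt_max_of_lt_left hC₁
  replace hA := hA.mono hK₁.le hC₁.le (le_max_left C₁ C₂)
  replace hB := hB.mono hK₂.le hC₂.le (le_max_right C₁ C₂)
  exact ⟨memODeg_iff_exists_oDegBound.2 ⟨K₁ + K₂, C, by positivity, hC, hA.add hB⟩,
    memODeg_iff_exists_oDegBound.2 ⟨K₁ * K₂, _, by positivity, by positivity,
      hA.cauchyProd hB hK₁.le hK₂.le hC.le⟩⟩

/-- The class `𝒪_deg^{ℏ,ℏ⁻¹}` is closed under the Cauchy product (and under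
addition); hence it is a subring of the ring of formal power series in `q₁, …, q_r` with
coefficients in `ℂ[ℏ, ℏ⁻¹]`. -/
theorem memODeg_subring (r : ℕ) (hr : 1 ≤ r) (ν : Fin r → ℤ)
    (A B : (Fin r → ℕ) → LaurentPolynomial ℂ)
    (hA : MemODeg r ν A) (hB : MemODeg r ν B) :
    MemODeg r ν (fun d => A d + B d) ∧ MemODeg r ν (cauchyProdL r A B) :=
  memODeg_subring_general r ν A B hA hB
end
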